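/- arXiv:1011.5438 — 8 statements merged into one kernel-verified Lean document; each statement's English description precedes it below -/
import Mathlib

section
/- Let k be a positive integer, A a nonempty finite set of integers, and B a nonempty finite set of integers. Let j be the number of distinct residues modulo k attained by elements of A. Then |A + k·B| ≥ |A| + j(|B| − 1). -/
open Finset Pointwise

/-!
Split `A` into its residue classes `A_r` modulo `k`. Adding `k·B` does not change residues, so the
sets `A_r + k·B` are pairwise disjoint subsets of `A + k·B`, and by Cauchy–Davenport in `ℤ` each
has at least `|A_r| + |B| - 1` elements. Summing over the `j` classes gives the bound.
-/

section FiberwiseSumset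

variable {G β : Type*} [DecidableEq β]

theorem sum_card_fiber_add_le_card_add [DecidableEq G] [Add G] (f : G → β) (A C : Finset G)
    (hf : ∀ a, ∀ c ∈ C, f (a + c) = f a) :
    ∑ r ∈ A.image f, #({a ∈ A | f a = r} + C) ≤ #(A + C) := by
  have hfiber : ∀ r, ∀ x ∈ {a ∈ A | f a = r} + C, f x = r := by
    intro r x hx
    obtain ⟨a, ha, c, hc, rfl⟩ := mem_add.1 hx
    rw [hf a c hc, (mem_filter.1 ha).2]
  have hdisj : ((A.image f : Finset β) : Set β).PairwiseDisjoint
      fun r => {a ∈ A | f a = r} + C := by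
    intro r _ r' _ hne
    exact disjoint_left.2 fun x hx hx' => hne ((hfiber r x hx).symm.trans (hfiber r' x hx'))
  rw [← card_biUnion hdisj]
  refine card_le_card (biUnion_subset.2 fun r _ => ?_)
  exact add_subset_add_right (filter_subset _ _)

-- No `[DecidableEq G]` here: the sumset must be built with the instance coming from `LinearOrder`,
-- as in `cauchy_davenport_add_of_linearOrder_isCancelAdd`.
theorem card_add_card_image_mul_le_card_add [LinearOrder G] [Add G] [IsCancelAdd G]
    [AddLeftMono G] [AddRightMono G] (f : G → β) {A C : Finset G} (hC : C.Nonempty)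
    (hf : ∀ a, ∀ c ∈ C, f (a + c) = f a) :
    #A + #(A.image f) * (#C - 1) ≤ #(A + C) := by
  have hfiber : ∀ r ∈ A.image f, #{a ∈ A | f a = r} + (#C - 1) ≤ #({a ∈ A | f a = r} + C) := by
    intro r hr
    obtain ⟨x, hx, hxr⟩ := mem_image.1 hr
    have hne : ({a ∈ A | f a = r}).Nonempty := ⟨x, mem_filter.2 ⟨hx, hxr⟩⟩
    have := cauchy_davenport_add_of_linearOrder_isCancelAdd hne hC
    have := hne.card_pos
    have := hC.card_pos
    omega
  calc #A + #(A.image f) * (#C - 1)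
      = ∑ r ∈ A.image f, (#{a ∈ A | f a = r} + (#C - 1)) := by
        rw [sum_add_distrib, ← card_eq_sum_card_image, sum_const, smul_eq_mul]
    _ ≤ ∑ r ∈ A.image f, #({a ∈ A | f a = r} + C) := sum_le_sum hfiber
    _ ≤ #(A + C) := sum_card_fiber_add_le_card_add f A C hf

end FiberwiseSumset

theorem stmt_4_general (k : ℕ) (hk : 0 < k) (A B : Finset ℤ) (hB : B.Nonempty) :
    A.card + (A.image (fun a => a % (k : ℤ))).card * (B.card - 1) ≤
      (A + B.image (fun b => (k : ℤ) * b)).card := by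
  have hcard : #(B.image fun b => (k : ℤ) * b) = #B :=
    card_image_of_injective _ (mul_right_injective₀ (by exact_mod_cast hk.ne'))
  have hres : ∀ a, ∀ c ∈ B.image (fun b => (k : ℤ) * b), (a + c) % (k : ℤ) = a % k := by
    intro a c hc
    obtain ⟨b, -, rfl⟩ := mem_image.1 hc
    exact Int.add_mul_emod_self_left a k b
  simpa only [hcard] using
    card_add_card_image_mul_le_card_add (fun a => a % (k : ℤ)) (hB.image _) hres

/-- Let `k` be a positive integer, `A`, `B` nonempty finite sets of integers, and `j` the
number of distinct residues modulo `k` attained by elements of `A`.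
Then `|A + k·B| ≥ |A| + j(|B| − 1)`. -/
theorem stmt_4 (k : ℕ) (hk : 0 < k) (A B : Finset ℤ) (hA : A.Nonempty) (hB : B.Nonempty) :
    A.card + (A.image (fun a => a % (k : ℤ))).card * (B.card - 1) ≤
      (A + B.image (fun b => (k : ℤ) * b)).card :=
  stmt_4_general k hk A B hB
end

section
/- (Chowla) Let n ≥ 2 be an integer, and let A and B be nonempty subsets of ℤ/nℤ. If 0 ∈ B and every element b ∈ B with b ≠ 0 is a unit of ℤ/nℤ (i.e., gcd(b, n) = 1 for any integer lift b), then |A + B| ≥ min(n, |A| + |B| − 1). -/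
open Finset Pointwise

private lemma chowla_aux (n : ℕ) (hn : 2 ≤ n) :
    ∀ k : ℕ, ∀ B : Finset (ZMod n), B.card ≤ k → ∀ A : Finset (ZMod n), A.Nonempty →
      (0 : ZMod n) ∈ B → (∀ b ∈ B, b ≠ 0 → IsUnit b) →
      min n (A.card + B.card - 1) ≤ (A + B).card := by
  classical
  haveI : NeZero n := ⟨by omega⟩
  intro k
  induction k with
  | zero =>
    intro B hBk A hA h0 _
    rw [Finset.card_eq_zero.mp (Nat.le_zero.mp hBk)] at h0
    simp at h0
  | succ k ih =>
    intro B hBk A hA h0 hunit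
    have hAB : A ⊆ A + B := fun x hx => Finset.mem_add.2 ⟨x, hx, 0, h0, add_zero x⟩
    by_cases hclosed : ∀ a ∈ A, ∀ b ∈ B, a + b ∈ A
    · have hsub : A + B ⊆ A := by
        intro x hx
        obtain ⟨a, ha, b, hb, rfl⟩ := Finset.mem_add.1 hx
        exact hclosed a ha b hb
      have hABeq : A + B = A := Finset.Subset.antisymm hsub hAB
      by_cases hBz : ∀ b ∈ B, b = 0
      · have hBeq : B = {0} := by
          apply Finset.Subset.antisymm
          · intro b hb; simp [hBz b hb]
          · simp [h0]
        rw [hABeq, hBeq]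
        simp
      · push_neg at hBz
        obtain ⟨b, hb, hbne⟩ := hBz
        obtain ⟨u, hbu⟩ := hunit b hb hbne
        obtain ⟨a, ha⟩ := hA
        have key : ∀ m : ℕ, a + (m : ZMod n) * b ∈ A := by
          intro m
          induction m with
          | zero => simpa using ha
          | succ m ihm =>
            have h1 := hclosed _ ihm b hb
            have h2 : a + (((m + 1 : ℕ)) : ZMod n) * b = (a + (m : ZMod n) * b) + b := by
              push_cast; ring
            rw [h2]; exact h1
        have huniv : ∀ y : ZMod n, y ∈ A := by
          intro y
          set m := ((y - a) * ↑u⁻¹).val with hmdef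
          have hm : ((m : ℕ) : ZMod n) = (y - a) * ↑u⁻¹ := by
            rw [hmdef, ZMod.natCast_val, ZMod.cast_id]
          have heq : a + (m : ZMod n) * b = y := by
            rw [hm, ← hbu, mul_assoc, Units.inv_mul, mul_one]; ring
          exact heq ▸ key m
        have hcard : A.card = n := by
          have h1 := Finset.card_le_card (fun y _ => huniv y : Finset.univ ⊆ A)
          have h2 := Finset.card_le_card (Finset.subset_univ A)
          simp [ZMod.card] at h1 h2
          omega
        calc min n (A.card + B.card - 1) ≤ n := min_le_left _ _
          _ = A.card := hcard.symm
          _ ≤ (A + B).card := Finset.card_le_card hAB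
    · push_neg at hclosed
      obtain ⟨a, ha, b₀, hb₀, hab₀⟩ := hclosed
      set A' : Finset (ZMod n) := A ∪ B.image (a + ·) with hA'
      set B' : Finset (ZMod n) := B.filter (fun b => a + b ∈ A) with hB'
      have h0' : (0 : ZMod n) ∈ B' := by
        simp only [hB', Finset.mem_filter]
        exact ⟨h0, by simpa using ha⟩
      have hB'sub : B' ⊆ B := Finset.filter_subset _ _
      have hb₀notin : b₀ ∉ B' := by simp [hB', hab₀]
      have hB'lt : B'.card < B.card :=
        Finset.card_lt_card ⟨hB'sub, fun h => hb₀notin (h hb₀)⟩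
      have hsum : A' + B' ⊆ A + B := by
        intro x hx
        obtain ⟨y, hy, b, hb, rfl⟩ := Finset.mem_add.1 hx
        have hbB : b ∈ B := hB'sub hb
        have habA : a + b ∈ A := (Finset.mem_filter.1 hb).2
        rcases Finset.mem_union.1 hy with hyA | hyI
        · exact Finset.mem_add.2 ⟨y, hyA, b, hbB, rfl⟩
        · obtain ⟨c, hc, rfl⟩ := Finset.mem_image.1 hyI
          exact Finset.mem_add.2 ⟨a + b, habA, c, hc, by ring⟩
      have himg : (B.image (a + ·)) \ A = (B \ B').image (a + ·) := by
        ext x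
        simp only [Finset.mem_sdiff, Finset.mem_image, hB', Finset.mem_filter]
        constructor
        · rintro ⟨⟨c, hc, rfl⟩, hx⟩
          exact ⟨c, ⟨hc, fun h => hx h.2⟩, rfl⟩
        · rintro ⟨c, ⟨hc, hcn⟩, rfl⟩
          exact ⟨⟨c, hc, rfl⟩, fun h => hcn ⟨hc, h⟩⟩
      have hinj : Function.Injective (a + ·) := fun x y h => by simpa using h
      have hcardA' : A'.card = A.card + (B.card - B'.card) := by
        rw [hA', Finset.union_comm, ← Finset.card_sdiff_add_card, himg,
          Finset.card_image_of_injective _ hinj, Finset.card_sdiff_of_subset hB'sub, Nat.add_comm]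
      have hkey := ih B' (by omega) A' ⟨a, Finset.mem_union_left _ ha⟩ h0'
        (fun b hb hbne => hunit b (hB'sub hb) hbne)
      have hcards : A'.card + B'.card = A.card + B.card := by
        have := Finset.card_le_card hB'sub
        omega
      calc min n (A.card + B.card - 1) = min n (A'.card + B'.card - 1) := by rw [hcards]
        _ ≤ (A' + B').card := hkey
        _ ≤ (A + B).card := Finset.card_le_card hsum

/-- (Chowla) Let `n ≥ 2`, and let `A` and `B` be nonempty subsets of `ℤ/nℤ`. If `0 ∈ B` and
every nonzero element of `B` is a unit of `ℤ/nℤ`, then `|A + B| ≥ min(n, |A| + |B| − 1)`. -/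
theorem stmt_5 (n : ℕ) (hn : 2 ≤ n) (A B : Finset (ZMod n)) (hA : A.Nonempty) (hB : B.Nonempty)
    (h0 : (0 : ZMod n) ∈ B) (hunit : ∀ b ∈ B, b ≠ 0 → IsUnit b) :
    min n (A.card + B.card - 1) ≤ (A + B).card :=
  chowla_aux n hn B.card B le_rfl A hA h0 hunit
end

section
/- Let k be a positive integer and A a nonempty finite set of integers. Write A = A₁ ∪ … ∪ A_j, where A_i = {a ∈ A : a ≡ u_i (mod k)} and u₁, …, u_j are the distinct residues in {0, …, k−1} attained by elements of A modulo k. For indices r, s set Δ_{rs} = (A_r + k·A) \ (A_r + k·A_s). Then for every subset I ⊆ {1, …, j}, Σ_{i∈I} |Δ_{ii}| ≥ |I|(|I| − 1). -/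
/-!
Let `M_u` and `m_u` be the largest and smallest elements of the class `A_u`. Every element of
`A_u + k·A_u` lies in `[m_u + k m_u, M_u + k M_u]`, so `M_u + k a` for `a ∈ A` with `a > M_u`, and
`m_u + k a` for `a ∈ A` with `a < m_u`, are distinct elements of `Δ_{uu}`. Since the `M_u` (and
the `m_u`) lie in distinct residue classes they are distinct, and over `u ∈ I` the number of pairs
`M_u < M_v` is `|I|(|I| - 1)/2`; the same holds for the `m_u`.
-/

open Finset Pointwise

section Counting

variable {ι α : Type*} [LinearOrder α] {s : Finset ι} {f : ι → α}

theorem Finset.sum_card_filter_lt_add_sum_card_filter_gt (hf : Set.InjOn f s) :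
    ∑ u ∈ s, #{v ∈ s | f u < f v} + ∑ u ∈ s, #{v ∈ s | f v < f u} = #s * (#s - 1) := by
  classical
  have hsplit : ∀ u ∈ s, #{v ∈ s | f u < f v} + #{v ∈ s | f v < f u} = #s - 1 := by
    intro u hu
    rw [← card_union_of_disjoint (disjoint_filter.2 fun _ _ h => (lt_asymm h)), ← filter_or,
      ← card_erase_of_mem hu]
    congr 1
    ext v
    simp only [mem_filter, mem_erase, ← ne_iff_lt_or_gt]
    exact ⟨fun ⟨hv, hne⟩ => ⟨fun h => hne (h ▸ rfl), hv⟩,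
      fun ⟨hne, hv⟩ => ⟨hv, fun h => hne (hf hv hu h.symm)⟩⟩
  rw [← sum_add_distrib, sum_congr rfl hsplit, sum_const, smul_eq_mul]

theorem Finset.sum_card_filter_gt_eq_sum_card_filter_lt :
    ∑ u ∈ s, #{v ∈ s | f v < f u} = ∑ u ∈ s, #{v ∈ s | f u < f v} :=
  sum_card_bipartiteAbove_eq_sum_card_bipartiteBelow (r := fun u v => f v < f u)

theorem Finset.two_mul_sum_card_filter_lt (hf : Set.InjOn f s) :
    2 * ∑ u ∈ s, #{v ∈ s | f u < f v} = #s * (#s - 1) := by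
  rw [← sum_card_filter_lt_add_sum_card_filter_gt hf, sum_card_filter_gt_eq_sum_card_filter_lt]
  ring

end Counting

theorem Finset.card_filter_comp_le_of_injOn {ι α : Type*} {s : Finset ι} {t : Finset α}
    {f : ι → α} (hf : Set.InjOn f s) (hst : Set.MapsTo f s t) (p : α → Prop) [DecidablePred p] :
    #{v ∈ s | p (f v)} ≤ #{a ∈ t | p a} :=
  card_le_card_of_injOn f (fun v hv => by
    rw [mem_coe, mem_filter] at hv ⊢
    exact ⟨hst hv.1, hv.2⟩) (hf.mono fun v hv => (mem_filter.1 hv).1)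

section Dilate

variable {k : ℤ} {B C : Finset ℤ} {M m : ℤ}

theorem mem_add_image_mul_le (hk : 0 < k) (hM : IsGreatest (B : Set ℤ) M) {x : ℤ}
    (hx : x ∈ B + B.image (k * ·)) : x ≤ M + k * M := by
  obtain ⟨a, ha, _, hkb, rfl⟩ := mem_add.1 hx
  obtain ⟨b, hb, rfl⟩ := mem_image.1 hkb
  have := mul_le_mul_of_nonneg_left (hM.2 hb) hk.le
  linarith [hM.2 ha]

theorem le_mem_add_image_mul (hk : 0 < k) (hm : IsLeast (B : Set ℤ) m) {x : ℤ}
    (hx : x ∈ B + B.image (k * ·)) : m + k * m ≤ x := by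
  obtain ⟨a, ha, _, hkb, rfl⟩ := mem_add.1 hx
  obtain ⟨b, hb, rfl⟩ := mem_image.1 hkb
  have := mul_le_mul_of_nonneg_left (hm.2 hb) hk.le
  linarith [hm.2 ha]

theorem card_filter_gt_add_card_filter_lt_le_card_sdiff (hk : 0 < k)
    (hM : IsGreatest (B : Set ℤ) M) (hm : IsLeast (B : Set ℤ) m) :
    #{c ∈ C | M < c} + #{c ∈ C | c < m} ≤
      #((B + C.image (k * ·)) \ (B + B.image (k * ·))) := by
  set top := {c ∈ C | M < c}.image (M + k * ·)
  set bot := {c ∈ C | c < m}.image (m + k * ·)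
  have hinj (a : ℤ) : Function.Injective (a + k * ·) :=
    (add_right_injective a).comp (mul_right_injective₀ hk.ne')
  have htop : ∀ x ∈ top, M + k * M < x := by
    simp only [top, mem_image, mem_filter]
    rintro _ ⟨c, ⟨-, hc⟩, rfl⟩
    linarith [mul_lt_mul_of_pos_left hc hk]
  have hbot : ∀ x ∈ bot, x < m + k * m := by
    simp only [bot, mem_image, mem_filter]
    rintro _ ⟨c, ⟨-, hc⟩, rfl⟩
    linarith [mul_lt_mul_of_pos_left hc hk]
  have hsub : top ∪ bot ⊆ (B + C.image (k * ·)) \ (B + B.image (k * ·)) := by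
    intro x hx
    refine mem_sdiff.2 ⟨?_, fun hxB => ?_⟩
    · simp only [top, bot, mem_union, mem_image, mem_filter] at hx
      rcases hx with ⟨c, ⟨hc, -⟩, rfl⟩ | ⟨c, ⟨hc, -⟩, rfl⟩
      · exact add_mem_add hM.1 (mem_image_of_mem _ hc)
      · exact add_mem_add hm.1 (mem_image_of_mem _ hc)
    · rcases mem_union.1 hx with hx | hx
      · exact (htop x hx).not_ge (mem_add_image_mul_le hk hM hxB)
      · exact (hbot x hx).not_ge (le_mem_add_image_mul hk hm hxB)
  have hdisj : Disjoint top bot := by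
    have hmM : m + k * m ≤ M + k * M := by
      have := hm.2 hM.1
      nlinarith
    exact disjoint_left.2 fun x hx hx' => by linarith [htop x hx, hbot x hx']
  calc #{c ∈ C | M < c} + #{c ∈ C | c < m} = #top + #bot := by
        rw [card_image_of_injective _ (hinj M), card_image_of_injective _ (hinj m)]
    _ = #(top ∪ bot) := (card_union_of_disjoint hdisj).symm
    _ ≤ _ := card_le_card hsub

end Dilate

theorem stmt_6_general (k : ℕ) (hk : 0 < k) (A : Finset ℤ)
    (I : Finset ℤ) (hI : I ⊆ A.image (fun a => a % (k : ℤ))) :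
    I.card * (I.card - 1) ≤
      ∑ u ∈ I,
        (((A.filter (fun a => a % (k : ℤ) = u)) + A.image (fun b => (k : ℤ) * b)) \
          ((A.filter (fun a => a % (k : ℤ) = u)) +
            (A.filter (fun a => a % (k : ℤ) = u)).image (fun b => (k : ℤ) * b))).card := by
  have hextremes : ∀ u ∈ I, ∃ M m, IsGreatest (↑(A.filter (· % (k : ℤ) = u)) : Set ℤ) M ∧
      IsLeast (↑(A.filter (· % (k : ℤ) = u)) : Set ℤ) m := by
    intro u hu
    obtain ⟨a, ha, rfl⟩ := mem_image.1 (hI hu)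
    have hne : (A.filter (· % (k : ℤ) = a % k)).Nonempty := ⟨a, mem_filter.2 ⟨ha, rfl⟩⟩
    exact ⟨_, _, isGreatest_max' _ hne, isLeast_min' _ hne⟩
  choose! M m hM hm using hextremes
  have hselect {e : ℤ → ℤ} (he : ∀ u ∈ I, e u ∈ A.filter (· % (k : ℤ) = u)) :
      Set.InjOn e I ∧ Set.MapsTo e I A :=
    ⟨fun u hu v hv h => by rw [← (mem_filter.1 (he u hu)).2, ← (mem_filter.1 (he v hv)).2, h],
      fun u hu => (mem_filter.1 (he u hu)).1⟩
  obtain ⟨hMinj, hMA⟩ := hselect fun u hu => (hM u hu).1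
  obtain ⟨hminj, hmA⟩ := hselect fun u hu => (hm u hu).1
  calc #I * (#I - 1) = ∑ u ∈ I, (#{v ∈ I | M u < M v} + #{v ∈ I | m v < m u}) := by
        rw [sum_add_distrib, sum_card_filter_gt_eq_sum_card_filter_lt]
        have := two_mul_sum_card_filter_lt hMinj
        have := two_mul_sum_card_filter_lt hminj
        omega
    _ ≤ ∑ u ∈ I, (#{a ∈ A | M u < a} + #{a ∈ A | a < m u}) :=
        sum_le_sum fun u _ => add_le_add (card_filter_comp_le_of_injOn hMinj hMA (M u < ·))
          (card_filter_comp_le_of_injOn hminj hmA (· < m u))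
    _ ≤ _ := sum_le_sum fun u hu =>
        card_filter_gt_add_card_filter_lt_le_card_sdiff (Int.natCast_pos.2 hk) (hM u hu) (hm u hu)

/-- Let `k` be a positive integer and `A` a nonempty finite set of integers, with residue
classes `A_u = {a ∈ A : a ≡ u (mod k)}` for `u` among the distinct residues attained by `A`.
With `Δ_{uu} = (A_u + k·A) \ (A_u + k·A_u)`, for every subset `I` of the attained residues,
`Σ_{u∈I} |Δ_{uu}| ≥ |I|(|I| − 1)`. -/
theorem stmt_6 (k : ℕ) (hk : 0 < k) (A : Finset ℤ) (hA : A.Nonempty)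
    (I : Finset ℤ) (hI : I ⊆ A.image (fun a => a % (k : ℤ))) :
    I.card * (I.card - 1) ≤
      ∑ u ∈ I,
        (((A.filter (fun a => a % (k : ℤ) = u)) + A.image (fun b => (k : ℤ) * b)) \
          ((A.filter (fun a => a % (k : ℤ) = u)) +
            (A.filter (fun a => a % (k : ℤ) = u)).image (fun b => (k : ℤ) * b))).card :=
  stmt_6_general k hk A I hI
end

section
/- Let p be a prime, α a positive integer, and k = p^α. Let A be a nonempty finite set of integers, with decomposition A = ⋃_{i=1}^{j} A_i into its residue classes A_i = k·X_i + u_i modulo k, indexed so that u₁ = 0 and |A₁| ≥ |A₂| ≥ … ≥ |A_j|. Assume some u_i is not divisible by p, and let m = min{1 ≤ i ≤ j : p ∤ u_i}. Let X̂_i denote the image of X_i in ℤ/kℤ and E = {1 ≤ i ≤ j : 0 < |X̂_i| < k}. Then for every i ∈ E with i ≠ m, |Δ_{ii}| ≥ |A_m|, where Δ_{ii} = (A_i + k·A) \ (A_i + k·A_i). -/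
open Finset Pointwise

/-- The residue class of `A` modulo `k` at residue `u`. -/
def resClass (k : ℕ) (A : Finset ℤ) (u : ℤ) : Finset ℤ :=
  A.filter (fun a => a % (k : ℤ) = u)

/-- The dilate `k·S = {k·s : s ∈ S}`. -/
def kdil (k : ℕ) (S : Finset ℤ) : Finset ℤ :=
  S.image (fun s => (k : ℤ) * s)

/-- `X_u = {(a − u)/k : a ∈ A, a ≡ u (mod k)}`. -/
def Xset (k : ℕ) (A : Finset ℤ) (u : ℤ) : Finset ℤ :=
  (resClass k A u).image (fun a => (a - u) / (k : ℤ))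

/-- `X̂_u`: the image of `X_u` in `ℤ/kℤ`. -/
def Xhat (k : ℕ) (A : Finset ℤ) (u : ℤ) : Finset (ZMod k) :=
  (Xset k A u).image (Int.cast : ℤ → ZMod k)


lemma escape {k : ℕ} [NeZero k] (S : Finset (ZMod k)) (hS : S.Nonempty)
    (hcard : S.card < k) (d : ZMod k) (hd : IsUnit d) :
    ∃ x ∈ S, x + d ∉ S := by
  by_contra h
  push_neg at h
  have hstep : ∀ n : ℕ, ∀ x ∈ S, x + (n : ZMod k) * d ∈ S := by
    intro n
    induction n with
    | zero => simp
    | succ n ih =>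
        intro x hx
        have h2 : (x + (n : ZMod k) * d) + d ∈ S := h _ (ih x hx)
        have : x + ((n : ℕ) + 1 : ZMod k) * d = (x + (n : ZMod k) * d) + d := by ring
        rw [Nat.cast_succ, this]
        exact h2
  obtain ⟨s, hs⟩ := hS
  obtain ⟨e, he⟩ := hd.exists_right_inv
  have huniv : ∀ t : ZMod k, t ∈ S := by
    intro t
    have hc : t = s + ((((t - s) * e).val : ℕ) : ZMod k) * d := by
      rw [ZMod.natCast_val, ZMod.cast_id]
      have : (t - s) * e * d = (t - s) * (d * e) := by ring
      rw [this, he, mul_one]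
      ring
    rw [hc]
    exact hstep _ s hs
  have : S = Finset.univ := Finset.eq_univ_iff_forall.mpr huniv
  rw [this, Finset.card_univ, ZMod.card] at hcard
  omega

lemma resClass_decomp {k : ℕ} (hk0 : 0 < k) {A : Finset ℤ} {u : ℤ} {a : ℤ}
    (ha : a ∈ resClass k A u) : a = (k : ℤ) * ((a - u) / (k : ℤ)) + u := by
  have hmod : a % (k : ℤ) = u := (Finset.mem_filter.mp ha).2
  have hu : u % (k : ℤ) = u := by rw [← hmod]; exact Int.emod_emod_of_dvd a dvd_rfl
  have hdvd : (k : ℤ) ∣ a - u := by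
    apply Int.dvd_of_emod_eq_zero
    rw [Int.sub_emod, hmod, hu, sub_self, Int.zero_emod]
  have h2 := Int.mul_ediv_cancel' hdvd
  omega

/-- For `i ∈ E`, `i ≠ m`: `|Δ_{ii}| ≥ |A_m|` (Lemma 3.1(i) of the paper). -/
theorem stmt_7 (p : ℕ) (hp : p.Prime) (α : ℕ) (hα : 0 < α) (k : ℕ) (hk : k = p ^ α)
    (A : Finset ℤ) (hA : A.Nonempty)
    (j : ℕ) (hj : 0 < j) (u : ℕ → ℕ)
    (hu_lt : ∀ i ∈ Finset.Icc 1 j, u i < k)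
    (hu_inj : ∀ i ∈ Finset.Icc 1 j, ∀ i' ∈ Finset.Icc 1 j, u i = u i' → i = i')
    (hu_attained : ∀ i ∈ Finset.Icc 1 j, (resClass k A (u i)).Nonempty)
    (hu_cover : ∀ a ∈ A, ∃ i ∈ Finset.Icc 1 j, a % (k : ℤ) = (u i : ℤ))
    (hu1 : u 1 = 0)
    (hmono : ∀ i ∈ Finset.Icc 1 j, ∀ i' ∈ Finset.Icc 1 j, i ≤ i' →
      (resClass k A (u i')).card ≤ (resClass k A (u i)).card)
    (m : ℕ) (hm_mem : m ∈ Finset.Icc 1 j) (hm_p : ¬ p ∣ u m)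
    (hm_min : ∀ i ∈ Finset.Icc 1 j, ¬ p ∣ u i → m ≤ i)
    (i : ℕ) (hi_mem : i ∈ Finset.Icc 1 j) (hi_ne : i ≠ m)
    (hiE : 0 < (Xhat k A (u i)).card ∧ (Xhat k A (u i)).card < k) :
    (resClass k A (u m)).card ≤
      ((resClass k A (u i) + kdil k A) \
        (resClass k A (u i) + kdil k (resClass k A (u i)))).card := by
  have hk0 : 0 < k := by rw [hk]; exact pow_pos hp.pos α
  haveI : NeZero k := ⟨hk0.ne'⟩
  have hkz : (k : ℤ) ≠ 0 := by exact_mod_cast hk0.ne'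
  have hpk : p ∣ k := by rw [hk]; exact dvd_pow_self p hα.ne'
  have hi_lt : u i < k := hu_lt i hi_mem
  -- choose the auxiliary index r
  obtain ⟨r, hr_mem, hr_card, hr_nd⟩ :
      ∃ r, r ∈ Finset.Icc 1 j ∧
        (resClass k A (u m)).card ≤ (resClass k A (u r)).card ∧
        ¬ p ∣ (u r + k - u i) := by
    by_cases hpi : p ∣ u i
    · refine ⟨m, hm_mem, le_refl _, ?_⟩
      intro hdvd
      apply hm_p
      have h1 : u i ≤ u m + k := le_trans hi_lt.le (Nat.le_add_left k (u m))
      have h3 : p ∣ u m + k := by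
        have h2 : u m + k = (u m + k - u i) + u i := by omega
        rw [h2]; exact Nat.dvd_add hdvd hpi
      exact (Nat.dvd_add_iff_left hpk).mpr h3
    · have h1 : (1 : ℕ) ∈ Finset.Icc 1 j := Finset.mem_Icc.mpr ⟨le_refl 1, hj⟩
      refine ⟨1, h1, hmono 1 h1 m hm_mem (Finset.mem_Icc.mp hm_mem).1, ?_⟩
      rw [hu1]
      intro hdvd
      apply hpi
      have h2 : u i = k - (0 + k - u i) := by omega
      rw [h2]
      exact Nat.dvd_sub hpk hdvd
  set n : ℕ := u r + k - u i with hn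
  have hui_le : u i ≤ u r + k := le_trans hi_lt.le (Nat.le_add_left k (u r))
  have hd_unit : IsUnit ((n : ZMod k)) := by
    rw [ZMod.isUnit_iff_coprime, hk]
    exact Nat.Coprime.pow_right α ((hp.coprime_iff_not_dvd.mpr hr_nd).symm)
  have hd_eq : ((n : ℕ) : ZMod k) = ((u r : ℤ) : ZMod k) - ((u i : ℤ) : ZMod k) := by
    rw [hn, Nat.cast_sub hui_le, Nat.cast_add, ZMod.natCast_self, add_zero]
    push_cast
    ring
  obtain ⟨xb, hxb_mem, hxb_out⟩ :=
    escape (Xhat k A (u i)) (Finset.card_pos.mp hiE.1) hiE.2 _ hd_unit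
  simp only [Xhat, Xset, Finset.mem_image] at hxb_mem
  obtain ⟨x, ⟨a, ha_mem, ha_eq⟩, hx_eq⟩ := hxb_mem
  have ha_dec : a = (k : ℤ) * x + (u i : ℤ) := by
    have := resClass_decomp hk0 ha_mem
    rw [ha_eq] at this
    exact this
  have hinj : Function.Injective (fun b : ℤ => a + (k : ℤ) * b) := by
    intro b c hbc
    simp only at hbc
    exact mul_left_cancel₀ hkz (by linarith)
  have hsub : (resClass k A (u r)).image (fun b => a + (k : ℤ) * b) ⊆
      ((resClass k A (u i) + kdil k A) \
        (resClass k A (u i) + kdil k (resClass k A (u i)))) := by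
    intro y hy
    obtain ⟨b, hb, rfl⟩ := Finset.mem_image.mp hy
    have hbA : b ∈ A := (Finset.mem_filter.mp hb).1
    have hbmod : b % (k : ℤ) = (u r : ℤ) := (Finset.mem_filter.mp hb).2
    rw [Finset.mem_sdiff]
    constructor
    · exact Finset.add_mem_add ha_mem (Finset.mem_image.mpr ⟨b, hbA, rfl⟩)
    · intro hmem
      rw [Finset.mem_add] at hmem
      obtain ⟨a', ha', z, hz, heq⟩ := hmem
      simp only [kdil, Finset.mem_image] at hz
      obtain ⟨c, hc, rfl⟩ := hz
      have hc_mod : c % (k : ℤ) = (u i : ℤ) := (Finset.mem_filter.mp hc).2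
      have ha'_dec := resClass_decomp hk0 ha'
      set x' := (a' - (u i : ℤ)) / (k : ℤ) with hx'
      have hxx : x' + c = x + b := by
        apply mul_left_cancel₀ hkz
        rw [mul_add, mul_add]
        linarith [ha_dec, ha'_dec, heq]
      have hbz : ((b : ℤ) : ZMod k) = ((u r : ℤ) : ZMod k) := by
        rw [ZMod.intCast_eq_intCast_iff]
        show b % (k : ℤ) = (u r : ℤ) % (k : ℤ)
        rw [hbmod, Int.emod_eq_of_lt (by positivity) (by exact_mod_cast hu_lt r hr_mem)]
      have hcz : ((c : ℤ) : ZMod k) = ((u i : ℤ) : ZMod k) := by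
        rw [ZMod.intCast_eq_intCast_iff]
        show c % (k : ℤ) = (u i : ℤ) % (k : ℤ)
        rw [hc_mod, Int.emod_eq_of_lt (by positivity) (by exact_mod_cast hi_lt)]
      have hcast : ((x' : ℤ) : ZMod k) = xb + ((n : ℕ) : ZMod k) := by
        have h := congrArg (Int.cast : ℤ → ZMod k) hxx
        push_cast at h
        rw [hbz, hcz] at h
        rw [hd_eq, ← hx_eq]
        linear_combination h
      apply hxb_out
      rw [← hcast]
      simp only [Xhat, Xset, Finset.mem_image]
      exact ⟨x', ⟨a', ha', rfl⟩, rfl⟩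
  calc (resClass k A (u m)).card ≤ (resClass k A (u r)).card := hr_card
    _ = ((resClass k A (u r)).image (fun b => a + (k : ℤ) * b)).card :=
        (Finset.card_image_of_injective _ hinj).symm
    _ ≤ _ := Finset.card_le_card hsub
end

section
/- Let p be a prime, α a positive integer, and k = p^α. Let A be a nonempty finite set of integers, with decomposition A = ⋃_{i=1}^{j} A_i into its residue classes A_i = k·X_i + u_i modulo k, indexed so that u₁ = 0 and |A₁| ≥ |A₂| ≥ … ≥ |A_j|. Assume some u_i is not divisible by p, and let m = min{1 ≤ i ≤ j : p ∤ u_i}. Let X̂_m denote the image of X_m in ℤ/kℤ. If |X̂_m| + m − 1 ≤ k, then |Δ_{mm}| ≥ |A₁| + |A₂| + … + |A_{m−1}|, where Δ_{mm} = (A_m + k·A) \ (A_m + k·A_m). -/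
open Finset Pointwise

/-!
Let `S = X̂_m ⊆ ℤ/kℤ` and `c_i = u_i - u_m` for `i < m`. By the minimality of `m`, `p ∣ u_i` while
`p ∤ u_m`, so the `c_i` are distinct units of `ℤ/p^αℤ`. Chowla's theorem gives
`|S + {0, c_1, …, c_t}| ≥ |S| + t` for `t < m`, so Hall's theorem yields distinct `f_t ∉ S` with
`f_t - c_{i_t} ∈ S` for some `i_t ≤ t`. Write `f_t - c_{i_t}` as `⌊a_t / k⌋ mod k` with `a_t ∈ A_m`.
On the translate `a_t + k·A_{i_t} ⊆ A_m + k·A` the residue of `⌊z / k⌋` mod `k` is constantly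
`f_t + u_m`, whereas on `A_m + k·A_m` it lies in `S + u_m`. Hence these translates are disjoint
subsets of `Δ_{mm}`, of sizes `|A_{i_t}| ≥ |A_t|`.
-/

theorem ZMod.eq_univ_of_forall_add_mem {n : ℕ} [NeZero n] {s : Finset (ZMod n)}
    (hs : s.Nonempty) {b : ZMod n} (hb : IsUnit b) (h : ∀ a ∈ s, a + b ∈ s) : s = univ := by
  refine eq_univ_iff_forall.2 fun x => ?_
  obtain ⟨a, ha⟩ := hs
  have hmul : ∀ N : ℕ, a + N * b ∈ s := by
    intro N
    induction N with
    | zero => simpa using ha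
    | succ N ih => simpa [add_mul, add_assoc] using h _ ih
  obtain ⟨b, rfl⟩ := hb
  simpa [mul_assoc] using hmul ((x - a) * ↑b⁻¹).val

theorem ZMod.chowla {n : ℕ} {s t : Finset (ZMod n)} (hs : s.Nonempty) (ht₀ : 0 ∈ t)
    (ht : ∀ b ∈ t, b ≠ 0 → IsUnit b) : min n (#s + #t - 1) ≤ #(s + t) := by
  obtain rfl | hn := eq_or_ne n 0
  · simp
  have : NeZero n := ⟨hn⟩
  induction hst : #t using Nat.strong_induction_on generalizing s t with
  | _ N ih =>
  subst hst
  have hsub : s ⊆ s + t := fun a ha => by simpa using add_mem_add ha ht₀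
  by_cases hclosed : ∀ a ∈ s, ∀ b ∈ t, a + b ∈ s
  · by_cases htriv : ∃ b ∈ t, b ≠ 0
    · obtain ⟨b, hbt, hb⟩ := htriv
      have huniv : s = univ :=
        ZMod.eq_univ_of_forall_add_mem hs (ht b hbt hb) fun a ha => hclosed a ha b hbt
      calc min n (#s + #t - 1) ≤ n := min_le_left _ _
        _ = #s := by simp [huniv]
        _ ≤ #(s + t) := card_le_card hsub
    · push Not at htriv
      have : #t ≤ 1 := card_le_one.2 fun a ha b hb => (htriv a ha).trans (htriv b hb).symm
      exact (min_le_right _ _).trans ((by omega : #s + #t - 1 ≤ #s).trans (card_le_card hsub))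
  · push Not at hclosed
    obtain ⟨a, ha, b, hbt, hab⟩ := hclosed
    -- The Dyson transform at `a` keeps `#s + #t` and `0 ∈ t`, does not enlarge `s + t`, and
    -- removes `b` from `t`.
    set x := addDysonETransform a (s, t)
    have hlt : #x.2 < #t := card_lt_card ⟨inter_subset_left, fun h => hab
      (mem_neg_vadd_finset_iff.1 (mem_inter.1 (h hbt)).2)⟩
    have := ih _ hlt (s := x.1) (t := x.2) (hs.mono subset_union_left)
      (mem_inter.2 ⟨ht₀, mem_neg_vadd_finset_iff.2 (by simpa using ha)⟩)
      (fun c hc => ht c (mem_inter.1 hc).1) rfl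
    calc min n (#s + #t - 1) = min n (#x.1 + #x.2 - 1) := by
          rw [addDysonETransform.card]
      _ ≤ #(x.1 + x.2) := this
      _ ≤ #(s + t) := card_le_card (addDysonETransform.subset _ _)

theorem exists_injOn_mem_of_le_card {β : Type*} [Nonempty β] (W : ℕ → Finset β) (T : ℕ)
    (hW : ∀ s ∈ Icc 1 T, s ≤ #(W s)) :
    ∃ f : ℕ → β, Set.InjOn f (Icc 1 T) ∧ ∀ s ∈ Icc 1 T, f s ∈ W s := by
  classical
  have hall : ∀ t : Finset (Icc 1 T), #t ≤ #(t.biUnion fun s => W s) := by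
    intro t
    obtain rfl | ht := t.eq_empty_or_nonempty
    · simp
    set M := t.max' ht
    calc #t ≤ #(Icc 1 (M : ℕ)) := card_le_card_of_injOn Subtype.val
            (fun s hs => mem_Icc.2 ⟨(mem_Icc.1 s.2).1, t.le_max' s hs⟩)
            Subtype.val_injective.injOn
      _ = M := Nat.card_Icc 1 M
      _ ≤ #(W M) := hW M M.2
      _ ≤ #(t.biUnion fun s => W s) :=
            card_le_card (subset_biUnion_of_mem (fun s : Icc 1 T => W s) (t.max'_mem ht))
  obtain ⟨g, hg, hgW⟩ := (all_card_le_biUnion_card_iff_exists_injective _).1 hall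
  refine ⟨fun s => if hs : s ∈ Icc 1 T then g ⟨s, hs⟩ else Classical.arbitrary β, ?_, ?_⟩
  · intro a ha b hb hab
    simp only [dif_pos (mem_coe.1 ha), dif_pos (mem_coe.1 hb)] at hab
    exact congrArg Subtype.val (hg hab)
  · intro s hs
    simp only [dif_pos hs]
    exact hgW ⟨s, hs⟩

theorem ZMod.isUnit_natCast_sub_of_dvd {p : ℕ} (hp : p.Prime) (α : ℕ) {a b : ℕ} (ha : p ∣ a)
    (hb : ¬ p ∣ b) : IsUnit ((a : ZMod (p ^ α)) - b) := by
  have hcast : (a : ZMod (p ^ α)) - b = ((a - b : ℤ) : ZMod (p ^ α)) := by push_cast; rfl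
  rw [hcast, ZMod.coe_int_isUnit_iff_isCoprime, Nat.cast_pow]
  refine ((Nat.prime_iff_prime_int.1 hp).coprime_iff_not_dvd.2 ?_).pow_left
  rwa [dvd_sub_right (Int.natCast_dvd_natCast.2 ha), Int.natCast_dvd_natCast]

theorem ZMod.natCast_injOn_Iio (n : ℕ) : Set.InjOn (Nat.cast : ℕ → ZMod n) (Set.Iio n) :=
  fun a ha b hb h => by
    simpa [Nat.mod_eq_of_lt ha, Nat.mod_eq_of_lt hb] using (ZMod.natCast_eq_natCast_iff' a b n).1 h

theorem Finset.sum_card_le_card_of_fibers {ι α β : Type*} [DecidableEq α] (φ : α → β)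
    {I : Finset ι} (E : ι → Finset α) (y : ι → β) (hy : Set.InjOn y I)
    (hE : ∀ s ∈ I, ∀ z ∈ E s, φ z = y s) {D : Finset α} (hED : ∀ s ∈ I, E s ⊆ D) :
    ∑ s ∈ I, #(E s) ≤ #D := by
  rw [← card_biUnion]
  · exact card_le_card (biUnion_subset.2 hED)
  · intro s hs s' hs' hne
    refine disjoint_left.2 fun z hz hz' => hne (hy hs hs' ?_)
    rw [← hE s hs z hz, hE s' hs' z hz']

def secondDigit (k : ℕ) (z : ℤ) : ZMod k := ((z / k : ℤ) : ZMod k)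

theorem secondDigit_add_mul {k : ℕ} (hk : k ≠ 0) (a b : ℤ) :
    secondDigit k (a + k * b) = secondDigit k a + b := by
  simp [secondDigit, Int.add_mul_ediv_left _ _ (Int.natCast_ne_zero.2 hk)]

theorem intCast_eq_of_mem_resClass {k : ℕ} {A : Finset ℤ} {u b : ℤ} (hb : b ∈ resClass k A u) :
    (b : ZMod k) = u := by
  rw [← (mem_filter.1 hb).2, ZMod.intCast_mod]

theorem Xhat_eq_image_secondDigit (k : ℕ) (A : Finset ℤ) (u : ℤ) :
    Xhat k A u = (resClass k A u).image (secondDigit k) := by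
  rw [Xhat, Xset, image_image]
  refine image_congr fun a ha => ?_
  rw [Function.comp_apply, ← (mem_filter.1 ha).2, Int.emod_def, sub_sub_cancel]
  obtain hk | hk := eq_or_ne (k : ℤ) 0
  · simp [secondDigit, hk]
  · simp [secondDigit, Int.mul_ediv_cancel_left _ hk]

theorem ZMod.exists_injOn_add_sdiff {n : ℕ} {S : Finset (ZMod n)} (hS : S.Nonempty)
    {c : ℕ → ZMod n} {T : ℕ} (hc : Set.InjOn c (Icc 1 T)) (hcu : ∀ i ∈ Icc 1 T, IsUnit (c i))
    (hT : #S + T ≤ n) :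
    ∃ f : ℕ → ZMod n, Set.InjOn f (Icc 1 T) ∧
      ∀ s ∈ Icc 1 T, f s ∉ S ∧ ∃ i ∈ Icc 1 s, f s - c i ∈ S := by
  set C : ℕ → Finset (ZMod n) := fun t => insert 0 ((Icc 1 t).image c)
  have hCS : ∀ t, S ⊆ S + C t := fun t x hx => by
    simpa using add_mem_add hx (mem_insert_self 0 ((Icc 1 t).image c))
  obtain ⟨f, hf, hfW⟩ := exists_injOn_mem_of_le_card (fun t => (S + C t) \ S) T <| by
    intro t ht
    obtain ⟨ht1, htT'⟩ := mem_Icc.1 ht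
    have htT : Icc 1 t ⊆ Icc 1 T := Icc_subset_Icc_right htT'
    have : Nontrivial (ZMod n) := ZMod.nontrivial_iff.2 (by have := hS.card_pos; omega)
    have h0 : 0 ∉ (Icc 1 t).image c := fun h0 => by
      obtain ⟨i, hi, hci⟩ := mem_image.1 h0
      exact (hcu i (htT hi)).ne_zero hci
    have hCcard : #(C t) = t + 1 := by
      rw [card_insert_of_notMem h0, card_image_of_injOn (hc.mono (coe_subset.2 htT)),
        Nat.card_Icc, Nat.add_sub_cancel]
    have := ZMod.chowla (t := C t) hS (mem_insert_self 0 _) fun b hb hb0 => by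
      obtain ⟨i, hi, rfl⟩ := mem_image.1 ((mem_insert.1 hb).resolve_left hb0)
      exact hcu i (htT hi)
    rw [hCcard, Nat.add_sub_assoc le_add_self, Nat.add_sub_cancel, min_eq_right (by omega)] at this
    rw [card_sdiff_of_subset (hCS t)]
    omega
  refine ⟨f, hf, fun s hs => ?_⟩
  obtain ⟨hfs, hfS⟩ := mem_sdiff.1 (hfW s hs)
  obtain ⟨x, hx, y, hy, hxy⟩ := mem_add.1 hfs
  obtain rfl | hy := mem_insert.1 hy
  · exact absurd (hxy ▸ by simpa using hx) hfS
  obtain ⟨i, hi, rfl⟩ := mem_image.1 hy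
  exact ⟨hfS, i, hi, by rw [← hxy, add_sub_cancel_right]; exact hx⟩

theorem sum_card_resClass_le_card_sdiff {ι : Type*} {k : ℕ} (hk : k ≠ 0) (A : Finset ℤ) (w : ℤ)
    {I : Finset ι} (v a : ι → ℤ) (ha : ∀ s ∈ I, a s ∈ resClass k A w)
    (hinj : Set.InjOn (fun s => secondDigit k (a s) + v s) I)
    (hout : ∀ s ∈ I, secondDigit k (a s) + v s - w ∉ Xhat k A w) :
    ∑ s ∈ I, #(resClass k A (v s)) ≤
      #((resClass k A w + kdil k A) \ (resClass k A w + kdil k (resClass k A w))) := by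
  have hmul_inj : ∀ s, Function.Injective (a s + k * ·) := fun s =>
    (add_right_injective (a s)).comp (mul_right_injective₀ (Int.natCast_ne_zero.2 hk))
  rw [← sum_congr rfl fun s _ => card_image_of_injective _ (hmul_inj s)]
  refine sum_card_le_card_of_fibers (secondDigit k) _ _ hinj ?_ ?_
  · rintro s - _ hz
    obtain ⟨b, hb, rfl⟩ := mem_image.1 hz
    rw [secondDigit_add_mul hk, intCast_eq_of_mem_resClass hb]
  · rintro s hs _ hz
    obtain ⟨b, hb, rfl⟩ := mem_image.1 hz
    refine mem_sdiff.2 ⟨add_mem_add (ha s hs) (mem_image_of_mem _ (mem_filter.1 hb).1), ?_⟩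
    intro hmem
    obtain ⟨a', ha', _, hy, he⟩ := mem_add.1 hmem
    obtain ⟨b', hb', rfl⟩ := mem_image.1 hy
    have hdigit := congrArg (secondDigit k) he
    rw [secondDigit_add_mul hk, secondDigit_add_mul hk, intCast_eq_of_mem_resClass hb,
      intCast_eq_of_mem_resClass hb'] at hdigit
    apply hout s hs
    rw [Xhat_eq_image_secondDigit, ← hdigit, add_sub_cancel_right]
    exact mem_image_of_mem _ ha'

theorem stmt_8_general (p : ℕ) (hp : p.Prime) (α : ℕ) (k : ℕ) (hk : k = p ^ α)
    (A : Finset ℤ)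
    (j : ℕ) (u : ℕ → ℕ)
    (hu_lt : ∀ i ∈ Finset.Icc 1 j, u i < k)
    (hu_inj : ∀ i ∈ Finset.Icc 1 j, ∀ i' ∈ Finset.Icc 1 j, u i = u i' → i = i')
    (hu_attained : ∀ i ∈ Finset.Icc 1 j, (resClass k A (u i)).Nonempty)
    (hmono : ∀ i ∈ Finset.Icc 1 j, ∀ i' ∈ Finset.Icc 1 j, i ≤ i' →
      (resClass k A (u i')).card ≤ (resClass k A (u i)).card)
    (m : ℕ) (hm_mem : m ∈ Finset.Icc 1 j) (hm_p : ¬ p ∣ u m)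
    (hm_min : ∀ i ∈ Finset.Icc 1 j, ¬ p ∣ u i → m ≤ i)
    (hX : (Xhat k A (u m)).card + m - 1 ≤ k) :
    ∑ i ∈ Finset.Icc 1 (m - 1), (resClass k A (u i)).card ≤
      ((resClass k A (u m) + kdil k A) \
        (resClass k A (u m) + kdil k (resClass k A (u m)))).card := by
  subst hk
  obtain ⟨hm1, hmj⟩ := mem_Icc.1 hm_mem
  have hIcc : Icc 1 (m - 1) ⊆ Icc 1 j := Icc_subset_Icc_right (by omega)
  set c : ℕ → ZMod (p ^ α) := fun i => (u i : ZMod (p ^ α)) - u m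
  have hc_inj : Set.InjOn c (Icc 1 (m - 1)) := fun i hi i' hi' h =>
    hu_inj i (hIcc hi) i' (hIcc hi') <| ZMod.natCast_injOn_Iio _ (hu_lt i (hIcc hi))
      (hu_lt i' (hIcc hi')) (sub_left_inj.1 h)
  have hc_unit : ∀ i ∈ Icc 1 (m - 1), IsUnit (c i) := fun i hi =>
    ZMod.isUnit_natCast_sub_of_dvd hp α (not_not.1 fun h => by
      have := hm_min i (hIcc hi) h
      have := (mem_Icc.1 hi).2
      omega) hm_p
  have hS : (Xhat (p ^ α) A (u m)).Nonempty := by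
    rw [Xhat_eq_image_secondDigit]
    exact (hu_attained m hm_mem).image _
  obtain ⟨f, hf, hfS⟩ := ZMod.exists_injOn_add_sdiff hS hc_inj hc_unit (by omega)
  choose! i hi hfi using fun s hs => (hfS s hs).2
  choose! a ha hax using fun s hs => mem_image.1 (Xhat_eq_image_secondDigit _ A _ ▸ hfi s hs)
  have hdigit : ∀ s ∈ Icc 1 (m - 1),
      secondDigit (p ^ α) (a s) + (u (i s) : ℤ) = f s + (u m : ℤ) := by
    intro s hs
    rw [hax s hs]
    push_cast
    ring
  calc ∑ s ∈ Icc 1 (m - 1), #(resClass (p ^ α) A (u s))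
      ≤ ∑ s ∈ Icc 1 (m - 1), #(resClass (p ^ α) A (u (i s))) := sum_le_sum fun s hs =>
        hmono _ (hIcc (Icc_subset_Icc_right (mem_Icc.1 hs).2 (hi s hs))) s (hIcc hs)
          (mem_Icc.1 (hi s hs)).2
    _ ≤ _ := by
      refine sum_card_resClass_le_card_sdiff (pow_ne_zero α hp.ne_zero) A (u m)
        (fun s => u (i s)) a ha (fun s hs s' hs' h => hf hs hs' ?_) fun s hs => ?_
      · simpa only [hdigit s hs, hdigit s' hs', add_left_inj] using h
      · rw [hdigit s hs, add_sub_cancel_right]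
        exact (hfS s hs).1

/-- If `|X̂_m| + m − 1 ≤ k` then `|Δ_{mm}| ≥ |A₁| + … + |A_{m−1}|`
(Lemma 3.1(ii) of the paper, first part). -/
theorem stmt_8 (p : ℕ) (hp : p.Prime) (α : ℕ) (hα : 0 < α) (k : ℕ) (hk : k = p ^ α)
    (A : Finset ℤ) (hA : A.Nonempty)
    (j : ℕ) (hj : 0 < j) (u : ℕ → ℕ)
    (hu_lt : ∀ i ∈ Finset.Icc 1 j, u i < k)
    (hu_inj : ∀ i ∈ Finset.Icc 1 j, ∀ i' ∈ Finset.Icc 1 j, u i = u i' → i = i')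
    (hu_attained : ∀ i ∈ Finset.Icc 1 j, (resClass k A (u i)).Nonempty)
    (hu_cover : ∀ a ∈ A, ∃ i ∈ Finset.Icc 1 j, a % (k : ℤ) = (u i : ℤ))
    (hu1 : u 1 = 0)
    (hmono : ∀ i ∈ Finset.Icc 1 j, ∀ i' ∈ Finset.Icc 1 j, i ≤ i' →
      (resClass k A (u i')).card ≤ (resClass k A (u i)).card)
    (m : ℕ) (hm_mem : m ∈ Finset.Icc 1 j) (hm_p : ¬ p ∣ u m)
    (hm_min : ∀ i ∈ Finset.Icc 1 j, ¬ p ∣ u i → m ≤ i)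
    (hX : (Xhat k A (u m)).card + m - 1 ≤ k) :
    ∑ i ∈ Finset.Icc 1 (m - 1), (resClass k A (u i)).card ≤
      ((resClass k A (u m) + kdil k A) \
        (resClass k A (u m) + kdil k (resClass k A (u m)))).card :=
  stmt_8_general p hp α k hk A j u hu_lt hu_inj hu_attained hmono m hm_mem hm_p hm_min hX
end

section
/- Let p be a prime, α a positive integer, and k = p^α. Let A be a nonempty finite set of integers, with decomposition A = ⋃_{i=1}^{j} A_i into its residue classes A_i = k·X_i + u_i modulo k, indexed so that u₁ = 0 and |A₁| ≥ |A₂| ≥ … ≥ |A_j|. Assume some u_i is not divisible by p, and let m = min{1 ≤ i ≤ j : p ∤ u_i}. Let X̂_m denote the image of X_m in ℤ/kℤ. If |X̂_m| + m − 1 > k, then |A_m + k·A| ≥ (k+1)|A_m| + m(|A₁| − |A_m|) − k. -/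
open Finset Pointwise

lemma card_le_of_forall_dvd_of_lt {p n : ℕ} {s : Finset ℕ} (h : ∀ x ∈ s, p ∣ x ∧ x < p * n) :
    s.card ≤ n := by
  calc s.card ≤ ((range n).image (p * ·)).card := card_le_card fun x hx => by
        obtain ⟨⟨c, rfl⟩, hlt⟩ := h x hx
        exact mem_image.2 ⟨c, mem_range.2 (Nat.lt_of_mul_lt_mul_left hlt), rfl⟩
    _ ≤ n := card_image_le.trans (card_range n).le

lemma two_mul_le_prime_pow_add_two {p α j m : ℕ} {u : ℕ → ℕ} (hp : p.Prime) (hα : 0 < α)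
    (hu_lt : ∀ i ∈ Icc 1 j, u i < p ^ α) (hu_inj : Set.InjOn u (Icc 1 j)) (hmj : m ≤ j)
    (hm_min : ∀ i ∈ Icc 1 j, ¬ p ∣ u i → m ≤ i) :
    2 * m ≤ p ^ α + 2 := by
  have hsub : Icc 1 (m - 1) ⊆ Icc 1 j := Icc_subset_Icc_right (by omega)
  have hpow : p ^ α = p * p ^ (α - 1) := by rw [← pow_succ']; congr; omega
  have hcard : m - 1 ≤ p ^ (α - 1) := by
    calc m - 1 = ((Icc 1 (m - 1)).image u).card := by
          rw [card_image_of_injOn (hu_inj.mono (coe_subset.2 hsub)), Nat.card_Icc]; omega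
      _ ≤ p ^ (α - 1) := card_le_of_forall_dvd_of_lt fun x hx => by
          obtain ⟨i, hi, rfl⟩ := mem_image.1 hx
          refine ⟨not_not.1 fun hndvd => ?_, hpow ▸ hu_lt i (hsub hi)⟩
          have := hm_min i (hsub hi) hndvd
          rw [mem_Icc] at hi
          omega
  have : 2 * p ^ (α - 1) ≤ p ^ α := hpow ▸ Nat.mul_le_mul_right _ hp.two_le
  omega

lemma exists_sub_mem_of_card_lt {G ι : Type*} [AddGroup G] [Fintype G] [DecidableEq G]
    {X : Finset G} {s : Finset ι} {v : ι → G} (hv : Set.InjOn v s)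
    (hcard : Fintype.card G < X.card + s.card) (r : G) : ∃ i ∈ s, r - v i ∈ X := by
  have himage : (s.image (r - v ·)).card = s.card :=
    card_image_of_injOn fun i hi i' hi' h => hv hi hi' (sub_right_injective h)
  obtain ⟨x, hx⟩ := inter_nonempty_of_card_lt_card_add_card (subset_univ X)
    (subset_univ (s.image (r - v ·))) (by rwa [card_univ, himage])
  obtain ⟨hxX, hxs⟩ := mem_inter.1 hx
  obtain ⟨i, hi, rfl⟩ := mem_image.1 hxs
  exact ⟨i, hi, hxX⟩

lemma exists_sub_natCast_mem_of_card_lt {k : ℕ} [NeZero k] {X : Finset (ZMod k)} {s : Finset ℕ}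
    {u : ℕ → ℕ} (hu_lt : ∀ i ∈ s, u i < k) (hu_inj : Set.InjOn u s)
    (hcard : k < X.card + s.card) (r : ZMod k) : ∃ i ∈ s, r - (u i : ZMod k) ∈ X :=
  exists_sub_mem_of_card_lt ((CharP.natCast_injOn_Iio (ZMod k) k).comp hu_inj hu_lt)
    (by rwa [ZMod.card]) r

def divFiber (k : ℕ) (S : Finset ℤ) (r : ZMod k) : Finset ℤ :=
  S.filter fun s => ((s / k : ℤ) : ZMod k) = r

section divFiber

variable {k : ℕ} [NeZero k]

lemma card_kdil (S : Finset ℤ) : (kdil k S).card = S.card :=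
  card_image_of_injective _ (mul_right_injective₀ (by exact_mod_cast NeZero.ne k))

lemma Xhat_eq_image (A : Finset ℤ) (u : ℤ) :
    Xhat k A u = (resClass k A u).image fun a => ((a / k : ℤ) : ZMod k) := by
  rw [Xhat, Xset, image_image]
  refine image_congr fun a ha => ?_
  have hmod : a % k = u := (mem_filter.1 (mem_coe.1 ha)).2
  rw [Function.comp_apply, ← hmod, Int.emod_def, sub_sub_cancel,
    Int.mul_ediv_cancel_left _ (by exact_mod_cast NeZero.ne k)]

lemma cast_ediv_mem_Xhat {A : Finset ℤ} {u a : ℤ} (ha : a ∈ resClass k A u) :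
    ((a / k : ℤ) : ZMod k) ∈ Xhat k A u := by
  rw [Xhat_eq_image]
  exact mem_image_of_mem _ ha

lemma divFiber_resClass_nonempty {A : Finset ℤ} {u : ℤ} {r : ZMod k} (hr : r ∈ Xhat k A u) :
    (divFiber k (resClass k A u) r).Nonempty := by
  rw [Xhat_eq_image, mem_image] at hr
  obtain ⟨a, ha, rfl⟩ := hr
  exact ⟨a, mem_filter.2 ⟨ha, rfl⟩⟩

lemma divFiber_add_kdil_subset (B A : Finset ℤ) (u : ℤ) (r : ZMod k) :
    divFiber k B (r - u) + kdil k (resClass k A u) ⊆ divFiber k (B + kdil k A) r := by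
  intro s hs
  obtain ⟨a, ha, _, hb', rfl⟩ := mem_add.1 hs
  obtain ⟨b, hb, rfl⟩ := mem_image.1 hb'
  rw [divFiber, mem_filter] at ha ⊢
  rw [resClass, mem_filter] at hb
  refine ⟨add_mem_add ha.1 (mem_image_of_mem _ hb.1), ?_⟩
  rw [Int.add_mul_ediv_left _ _ (by exact_mod_cast NeZero.ne k), Int.cast_add, ha.2,
    ← ZMod.intCast_mod b, hb.2, sub_add_cancel]

lemma card_divFiber_add_card_resClass_le {B A : Finset ℤ} {u : ℤ} {r : ZMod k}
    (hB : (divFiber k B (r - u)).Nonempty) (hA : (resClass k A u).Nonempty) :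
    (divFiber k B (r - u)).card + (resClass k A u).card ≤
      (divFiber k (B + kdil k A) r).card + 1 := by
  have hCD : (divFiber k B (r - u)).card + (kdil k (resClass k A u)).card - 1 ≤
      (divFiber k B (r - u) + kdil k (resClass k A u)).card :=
    cauchy_davenport_add_of_linearOrder_isCancelAdd hB (hA.image _)
  have hsub := card_le_card (divFiber_add_kdil_subset B A u r)
  rw [card_kdil] at hCD
  have := hB.card_pos
  omega

lemma card_resClass_le_card_divFiber {A : Finset ℤ} {u v : ℤ} {r : ZMod k}
    (hr : r - v ∈ Xhat k A u) (hv : (resClass k A v).Nonempty) :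
    (resClass k A v).card ≤ (divFiber k (resClass k A u + kdil k A) r).card := by
  have := card_divFiber_add_card_resClass_le (divFiber_resClass_nonempty hr) hv
  have := (divFiber_resClass_nonempty hr).card_pos
  omega

lemma card_add_mul_le_of_divFiber {B S : Finset ℤ} {X : Finset (ZMod k)} {c d : ℕ}
    (hB : ∀ b ∈ B, ((b / k : ℤ) : ZMod k) ∈ X)
    (hX : ∀ r ∈ X, (divFiber k B r).card + c ≤ (divFiber k S r).card + 1)
    (hXc : ∀ r ∉ X, d ≤ (divFiber k S r).card) :
    B.card + X.card * c + (k - X.card) * d ≤ S.card + X.card := by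
  have hBsum : B.card = ∑ r ∈ X, (divFiber k B r).card := card_eq_sum_card_fiberwise hB
  have hSsum : S.card = ∑ r, (divFiber k S r).card :=
    card_eq_sum_card_fiberwise fun _ _ => mem_univ _
  have hin : ∑ r ∈ X, ((divFiber k B r).card + c) ≤ ∑ r ∈ X, ((divFiber k S r).card + 1) :=
    sum_le_sum hX
  have hout : ∑ _r ∈ Xᶜ, d ≤ ∑ r ∈ Xᶜ, (divFiber k S r).card :=
    sum_le_sum fun r hr => hXc r (mem_compl.1 hr)
  rw [sum_add_distrib, sum_add_distrib, ← hBsum, sum_const, sum_const] at hin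
  rw [sum_const, card_compl, ZMod.card] at hout
  rw [hSsum, ← sum_add_sum_compl X]
  simp only [smul_eq_mul, mul_one] at hin hout
  linarith

end divFiber

theorem stmt_9_general (p : ℕ) (hp : p.Prime) (α : ℕ) (hα : 0 < α) (k : ℕ) (hk : k = p ^ α)
    (A : Finset ℤ)
    (j : ℕ) (u : ℕ → ℕ)
    (hu_lt : ∀ i ∈ Finset.Icc 1 j, u i < k)
    (hu_inj : ∀ i ∈ Finset.Icc 1 j, ∀ i' ∈ Finset.Icc 1 j, u i = u i' → i = i')
    (hu_attained : ∀ i ∈ Finset.Icc 1 j, (resClass k A (u i)).Nonempty)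
    (hu1 : u 1 = 0)
    (hmono : ∀ i ∈ Finset.Icc 1 j, ∀ i' ∈ Finset.Icc 1 j, i ≤ i' →
      (resClass k A (u i')).card ≤ (resClass k A (u i)).card)
    (m : ℕ) (hm_mem : m ∈ Finset.Icc 1 j)
    (hm_min : ∀ i ∈ Finset.Icc 1 j, ¬ p ∣ u i → m ≤ i)
    (hX : k < (Xhat k A (u m)).card + m - 1) :
    ((k : ℤ) + 1) * (resClass k A (u m)).card +
        (m : ℤ) * ((resClass k A (u 1)).card - (resClass k A (u m)).card) - (k : ℤ) ≤
      ((resClass k A (u m) + kdil k A).card : ℤ) := by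
  have : NeZero k := ⟨by rw [hk]; exact (pow_pos hp.pos α).ne'⟩
  obtain ⟨hm1, hmj⟩ := mem_Icc.1 hm_mem
  have h1 : 1 ∈ Icc 1 j := mem_Icc.2 ⟨le_rfl, hm1.trans hmj⟩
  have hIcc : Icc 1 m ⊆ Icc 1 j := Icc_subset_Icc_right hmj
  set X := Xhat k A (u m)
  have hXk : X.card ≤ k := (card_le_univ X).trans_eq (ZMod.card _)
  have hmk : 2 * m ≤ k + 2 := by
    rw [hk] at hu_lt ⊢
    exact two_mul_le_prime_pow_add_two hp hα hu_lt hu_inj hmj hm_min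
  have hcover (r : ZMod k) : ∃ i ∈ Icc 1 m, r - ((u i : ℤ) : ZMod k) ∈ X := by
    simpa using exists_sub_natCast_mem_of_card_lt (fun i hi => hu_lt i (hIcc hi))
      (Set.InjOn.mono (coe_subset.2 hIcc) hu_inj) (by rw [Nat.card_Icc]; omega) r
  have hsum := card_add_mul_le_of_divFiber (X := X) (c := (resClass k A (u 1)).card)
    (d := (resClass k A (u m)).card) (fun b hb => cast_ediv_mem_Xhat hb)
    (fun r hr => by
      simpa [hu1] using card_divFiber_add_card_resClass_le (u := (u 1 : ℤ)) (r := r)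
        (divFiber_resClass_nonempty (by simpa [hu1] using hr)) (hu_attained 1 h1))
    (fun r _ => by
      obtain ⟨i, hi, hri⟩ := hcover r
      exact (hmono i (hIcc hi) m hm_mem (mem_Icc.1 hi).2).trans
        (card_resClass_le_card_divFiber hri (hu_attained i (hIcc hi))))
  have ham : (resClass k A (u m)).card ≤ (resClass k A (u 1)).card := hmono 1 h1 m hm_mem hm1
  have hmX : m ≤ X.card := by omega
  have hXk' : (X.card : ℤ) ≤ k := by exact_mod_cast hXk
  zify [hXk] at hsum ham hmX
  nlinarith [mul_nonneg (sub_nonneg.2 hmX) (sub_nonneg.2 ham)]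

/-- If `|X̂_m| + m − 1 > k` then `|A_m + k·A| ≥ (k+1)|A_m| + m(|A₁| − |A_m|) − k`
(Lemma 3.1(ii) of the paper, second part). -/
theorem stmt_9 (p : ℕ) (hp : p.Prime) (α : ℕ) (hα : 0 < α) (k : ℕ) (hk : k = p ^ α)
    (A : Finset ℤ) (hA : A.Nonempty)
    (j : ℕ) (hj : 0 < j) (u : ℕ → ℕ)
    (hu_lt : ∀ i ∈ Finset.Icc 1 j, u i < k)
    (hu_inj : ∀ i ∈ Finset.Icc 1 j, ∀ i' ∈ Finset.Icc 1 j, u i = u i' → i = i')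
    (hu_attained : ∀ i ∈ Finset.Icc 1 j, (resClass k A (u i)).Nonempty)
    (hu_cover : ∀ a ∈ A, ∃ i ∈ Finset.Icc 1 j, a % (k : ℤ) = (u i : ℤ))
    (hu1 : u 1 = 0)
    (hmono : ∀ i ∈ Finset.Icc 1 j, ∀ i' ∈ Finset.Icc 1 j, i ≤ i' →
      (resClass k A (u i')).card ≤ (resClass k A (u i)).card)
    (m : ℕ) (hm_mem : m ∈ Finset.Icc 1 j) (hm_p : ¬ p ∣ u m)
    (hm_min : ∀ i ∈ Finset.Icc 1 j, ¬ p ∣ u i → m ≤ i)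
    (hX : k < (Xhat k A (u m)).card + m - 1) :
    ((k : ℤ) + 1) * (resClass k A (u m)).card +
        (m : ℤ) * ((resClass k A (u 1)).card - (resClass k A (u m)).card) - (k : ℤ) ≤
      ((resClass k A (u m) + kdil k A).card : ℤ) :=
  stmt_9_general p hp α hα k hk A j u hu_lt hu_inj hu_attained hu1 hmono m hm_mem hm_min hX
end

section
/- Let k > 2 be an integer that is not prime. Let A be a nonempty subset of ℤ/kℤ, let q be an integer with gcd(q, k) ≠ 1, and let B be a subset of ℤ/kℤ with 0 ∈ B and B ⊆ {0, q̄} ∪ {b̄ : b ∈ ℤ, gcd(b, k) = 1}, where x̄ denotes the residue of x modulo k. If |A + {0, q̄}| ≥ |A| + 1, then |A + B| ≥ min(k, |A| + |B| − 1). -/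
open Finset Pointwise

/-!
Chowla's theorem, proved by induction on `|B|` with Dyson's e-transform: if some nonzero
`b ∈ B` fails `a + b ∈ A` for some `a ∈ A`, the transform at `a` keeps `|A| + |B|`, does not
enlarge `A + B` and drops `b` from `B`; otherwise `A` is invariant under the generator `b`, so
`A + B` is everything. For the theorem, the hypothesis `|A + {0, q̄}| > |A|` gives `a ∈ A` with
`a + q̄ ∉ A`, and one e-transform at `a` removes the only non-generator `q̄` from `B`.
-/

lemma Finset.eq_univ_of_forall_add_mem {G : Type*} [AddGroup G] [Fintype G] {A : Finset G} {b : G}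
    (hA : A.Nonempty) (hb : AddSubgroup.zmultiples b = ⊤) (h : ∀ a ∈ A, a + b ∈ A) : A = univ := by
  have hmul : ∀ n : ℕ, ∀ a ∈ A, a + n • b ∈ A := by
    intro n
    induction n with
    | zero => simp
    | succ n ih => exact fun a ha ↦ by simpa [succ_nsmul, ← add_assoc] using h _ (ih a ha)
  obtain ⟨a, ha⟩ := hA
  refine eq_univ_of_forall fun x ↦ ?_
  have hx : -a + x ∈ AddSubgroup.zmultiples b := hb ▸ AddSubgroup.mem_top _
  obtain ⟨n, hn⟩ := (isOfFinAddOrder_of_finite b).mem_multiples_iff_mem_zmultiples.2 hx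
  simpa [hn] using hmul n a ha

section AddCommGroup

variable {G : Type*} [AddCommGroup G] [DecidableEq G]

lemma Finset.mem_addDysonETransform_snd {a b : G} {A B : Finset G} :
    b ∈ (addDysonETransform a (A, B)).2 ↔ b ∈ B ∧ a + b ∈ A := by
  simp [addDysonETransform, Finset.mem_neg_vadd_finset_iff]

lemma Finset.min_le_card_add_of_addDysonETransform {n : ℕ} (e : G) (x : Finset G × Finset G)
    (h : min n (#(addDysonETransform e x).1 + #(addDysonETransform e x).2 - 1) ≤
      #((addDysonETransform e x).1 + (addDysonETransform e x).2)) :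
    min n (#x.1 + #x.2 - 1) ≤ #(x.1 + x.2) := by
  have hcard := addDysonETransform.card e x
  have hsub := card_le_card (addDysonETransform.subset e x)
  omega

/-- **Chowla's theorem**. -/
theorem Finset.min_le_card_add_of_zmultiples_eq_top [Fintype G] {A B : Finset G}
    (hA : A.Nonempty) (h0 : (0 : G) ∈ B)
    (hB : ∀ b ∈ B, b ≠ 0 → AddSubgroup.zmultiples b = ⊤) :
    min (Fintype.card G) (#A + #B - 1) ≤ #(A + B) := by
  induction hn : #B using Nat.strong_induction_on generalizing A B with
  | _ n ih =>
  subst hn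
  obtain rfl | hBnt := eq_singleton_or_nontrivial h0
  · simp
  obtain ⟨b, hbB, hb0⟩ := hBnt.exists_ne 0
  by_cases hclosed : ∀ a ∈ A, a + b ∈ A
  · have hAB : A ⊆ A + B := fun a ha ↦ by simpa using add_mem_add ha h0
    have hAuniv := eq_univ_of_forall_add_mem hA (hB b hbB hb0) hclosed
    have := card_le_card (hAuniv ▸ hAB : univ ⊆ A + B)
    rw [card_univ] at this
    omega
  push Not at hclosed
  obtain ⟨a, ha, hab⟩ := hclosed
  refine min_le_card_add_of_addDysonETransform a (A, B) (ih _ ?_ ?_ ?_ ?_ rfl)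
  · refine card_lt_card ⟨inter_subset_left, fun hsub ↦ hab ?_⟩
    exact (mem_addDysonETransform_snd.1 (hsub hbB)).2
  · exact hA.mono subset_union_left
  · exact mem_addDysonETransform_snd.2 ⟨h0, by simpa using ha⟩
  · exact fun c hc ↦ hB c (mem_addDysonETransform_snd.1 hc).1

end AddCommGroup

lemma ZMod.zmultiples_intCast_eq_top {k : ℕ} {b : ℤ} (hb : b.gcd (k : ℤ) = 1) :
    AddSubgroup.zmultiples (b : ZMod k) = ⊤ := by
  have hbezout : (b : ZMod k) * b.gcdA k = 1 := by
    have := congrArg (fun m : ℤ ↦ (m : ZMod k)) (Int.gcd_eq_gcd_ab b k)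
    simpa [hb] using this.symm
  refine (AddSubgroup.eq_top_iff' _).2 fun y ↦ ?_
  obtain ⟨m, rfl⟩ := ZMod.intCast_surjective y
  refine ⟨m * b.gcdA k, show (m * b.gcdA k) • (b : ZMod k) = m from ?_⟩
  rw [zsmul_eq_mul, Int.cast_mul, mul_comm, mul_comm (m : ZMod k), ← mul_assoc, hbezout, one_mul]

theorem stmt_12_general (k : ℕ)
    (A : Finset (ZMod k)) (hA : A.Nonempty)
    (q : ℤ)
    (B : Finset (ZMod k)) (h0B : (0 : ZMod k) ∈ B)
    (hB : ∀ x ∈ B, x = 0 ∨ x = (q : ZMod k) ∨ ∃ b : ℤ, b.gcd (k : ℤ) = 1 ∧ (b : ZMod k) = x)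
    (hAq : A.card + 1 ≤ (A + ({0, (q : ZMod k)} : Finset (ZMod k))).card) :
    min k (A.card + B.card - 1) ≤ (A + B).card := by
  rcases Nat.eq_zero_or_pos k with rfl | hk
  · simp
  have : NeZero k := ⟨hk.ne'⟩
  obtain ⟨a, ha, haq⟩ : ∃ a ∈ A, a + (q : ZMod k) ∉ A := by
    by_contra! h
    have hsub : A + {0, (q : ZMod k)} ⊆ A := by
      simpa [add_subset_iff, or_imp, forall_and] using h
    have := card_le_card hsub
    omega
  refine min_le_card_add_of_addDysonETransform a (A, B) ?_
  have hgen : ∀ c ∈ (addDysonETransform a (A, B)).2, c ≠ 0 → AddSubgroup.zmultiples c = ⊤ := by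
    intro c hc hc0
    obtain ⟨hcB, hac⟩ := mem_addDysonETransform_snd.1 hc
    obtain rfl | rfl | ⟨b, hb, rfl⟩ := hB c hcB
    · exact absurd rfl hc0
    · exact absurd hac haq
    · exact ZMod.zmultiples_intCast_eq_top hb
  simpa using min_le_card_add_of_zmultiples_eq_top (hA.mono subset_union_left)
    (mem_addDysonETransform_snd.2 ⟨h0B, by simpa using ha⟩) hgen

/-- Let `k > 2` be an integer that is not prime, `A` a nonempty subset of `ℤ/kℤ`, `q` an
integer with `gcd(q, k) ≠ 1`, and `B ⊆ ℤ/kℤ` with `0 ∈ B` and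
`B ⊆ {0, q̄} ∪ {b̄ : gcd(b, k) = 1}`. If `|A + {0, q̄}| ≥ |A| + 1`, then
`|A + B| ≥ min(k, |A| + |B| − 1)`. -/
theorem stmt_12 (k : ℕ) (hk2 : 2 < k) (hknp : ¬ k.Prime)
    (A : Finset (ZMod k)) (hA : A.Nonempty)
    (q : ℤ) (hq : q.gcd (k : ℤ) ≠ 1)
    (B : Finset (ZMod k)) (h0B : (0 : ZMod k) ∈ B)
    (hB : ∀ x ∈ B, x = 0 ∨ x = (q : ZMod k) ∨ ∃ b : ℤ, b.gcd (k : ℤ) = 1 ∧ (b : ZMod k) = x)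
    (hAq : A.card + 1 ≤ (A + ({0, (q : ZMod k)} : Finset (ZMod k))).card) :
    min k (A.card + B.card - 1) ≤ (A + B).card :=
  stmt_12_general k A hA q B h0B hB hAq
end

section
/- Let p₁ and p₂ be distinct primes and k = p₁p₂. Let A be a nonempty finite set of integers, with decomposition A = ⋃_{i=1}^{j} A_i into its residue classes A_i = k·X_i + u_i modulo k, indexed so that u₁ = 0 and |A₁| ≥ |A₂| ≥ … ≥ |A_j|, and assume j ≥ 2 and gcd(u₁, u₂, …, u_j) = 1. Let X̂_i denote the image of X_i in ℤ/kℤ and E = {1 ≤ i ≤ j : 0 < |X̂_i| < k}. If gcd(u₂, k) = 1, then: |Δ_{22}| ≥ |A₁| whenever 2 ∈ E, and |Δ_{ii}| ≥ |A₂| whenever i ∈ E and i ≠ 2, where Δ_{ii} = (A_i + k·A) \ (A_i + k·A_i). -/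
open Finset Pointwise

/-- `Δ_{uu} = (A_u + k·A) \ (A_u + k·A_u)`. -/
def Delta (k : ℕ) (A : Finset ℤ) (u : ℤ) : Finset ℤ :=
  (resClass k A u + kdil k A) \ (resClass k A u + kdil k (resClass k A u))

lemma cast_of_emod (k : ℕ) (b : ℤ) (u : ℕ) (h : b % (k : ℤ) = u) :
    (b : ZMod k) = u := by
  have hb : b = (u : ℤ) + (k : ℤ) * (b / k) := by
    rw [← h]; exact (Int.emod_add_mul_ediv b k).symm
  rw [hb]; push_cast; simp

lemma res_decomp (k : ℕ) (hk : (k : ℤ) ≠ 0) (u : ℕ) (a : ℤ) (ha : a % (k : ℤ) = u) :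
    a = (u : ℤ) + (k : ℤ) * ((a - u) / k) := by
  have h1 : a = (u : ℤ) + (k : ℤ) * (a / k) := by
    rw [← ha]; exact (Int.emod_add_mul_ediv a k).symm
  have h2 : a - (u : ℤ) = (k : ℤ) * (a / k) := by omega
  rw [h2, Int.mul_ediv_cancel_left _ hk]; exact h1

lemma lemA (k : ℕ) (hk : k ≠ 0) (A : Finset ℤ) (ui us : ℕ)
    (x : ℤ) (hx : x ∈ Xset k A (ui : ℤ))
    (hmiss : ((x : ZMod k) + us - ui) ∉ Xhat k A (ui : ℤ)) :
    (resClass k A (us : ℤ)).card ≤ (Delta k A (ui : ℤ)).card := by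
  have hkz : (k : ℤ) ≠ 0 := by exact_mod_cast hk
  obtain ⟨a, ha, hax⟩ := Finset.mem_image.mp hx
  have haA : a ∈ A := (Finset.mem_filter.mp ha).1
  have hamod : a % (k : ℤ) = ui := (Finset.mem_filter.mp ha).2
  have haeq : a = (ui : ℤ) + (k : ℤ) * x := by
    rw [← hax]; exact res_decomp k hkz ui a hamod
  set f : ℤ → ℤ := fun b => a + (k : ℤ) * b with hf
  have hinj : Function.Injective f := by
    intro b₁ b₂ h
    simp only [hf] at h
    have : (k : ℤ) * b₁ = (k : ℤ) * b₂ := by linarith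
    exact mul_left_cancel₀ hkz this
  have hsub : (resClass k A (us : ℤ)).image f ⊆ Delta k A (ui : ℤ) := by
    intro t ht
    obtain ⟨b, hb, hbt⟩ := Finset.mem_image.mp ht
    have hbA : b ∈ A := (Finset.mem_filter.mp hb).1
    have hbmod : b % (k : ℤ) = us := (Finset.mem_filter.mp hb).2
    rw [Delta, Finset.mem_sdiff]
    constructor
    · rw [Finset.mem_add]
      exact ⟨a, ha, (k : ℤ) * b, Finset.mem_image_of_mem _ hbA, hbt⟩
    · intro hmem
      rw [Finset.mem_add] at hmem
      obtain ⟨a', ha', z, hz, hsum⟩ := hmem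
      obtain ⟨b', hb', rfl⟩ := Finset.mem_image.mp hz
      have ha'mod : a' % (k : ℤ) = ui := (Finset.mem_filter.mp ha').2
      have hb'mod : b' % (k : ℤ) = ui := (Finset.mem_filter.mp hb').2
      set x' : ℤ := (a' - ui) / k with hx'def
      have ha'eq : a' = (ui : ℤ) + (k : ℤ) * x' := res_decomp k hkz ui a' ha'mod
      have hx' : x' ∈ Xset k A (ui : ℤ) := Finset.mem_image_of_mem _ ha'
      have hfb : a + (k : ℤ) * b = a' + (k : ℤ) * b' := by
        have := hbt.trans hsum.symm
        simpa [hf] using this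
      have hxb : x + b = x' + b' := by
        rw [haeq, ha'eq] at hfb
        have : (k : ℤ) * (x + b) = (k : ℤ) * (x' + b') := by ring_nf; ring_nf at hfb; linarith
        exact mul_left_cancel₀ hkz this
      have hcb : (b : ZMod k) = us := cast_of_emod k b us hbmod
      have hcb' : (b' : ZMod k) = ui := cast_of_emod k b' ui hb'mod
      have hcast : ((x' : ℤ) : ZMod k) = (x : ZMod k) + us - ui := by
        have h := congrArg (Int.cast : ℤ → ZMod k) hxb
        push_cast at h
        rw [hcb, hcb'] at h
        linear_combination -h
      exact hmiss (hcast ▸ Finset.mem_image_of_mem _ hx')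
  calc (resClass k A (us : ℤ)).card
      = ((resClass k A (us : ℤ)).image f).card :=
        (Finset.card_image_of_injective _ hinj).symm
    _ ≤ (Delta k A (ui : ℤ)).card := Finset.card_le_card hsub

lemma closed_rev {k : ℕ} (S : Finset (ZMod k)) (g : ZMod k)
    (hcl : ∀ x ∈ S, x + g ∈ S) : ∀ x, x + g ∈ S → x ∈ S := by
  have himg : S.image (· + g) = S := by
    apply Finset.eq_of_subset_of_card_le
    · intro y hy
      obtain ⟨x, hx, rfl⟩ := Finset.mem_image.mp hy
      exact hcl x hx
    · rw [Finset.card_image_of_injective _ (add_left_injective g)]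
  intro x hx
  rw [← himg] at hx
  obtain ⟨y, hy, hyx⟩ := Finset.mem_image.mp hx
  have : y = x := by
    have := hyx
    simpa using add_right_cancel this
  exact this ▸ hy

lemma closed_full {k : ℕ} [NeZero k] (S : Finset (ZMod k)) (hS : S.Nonempty)
    (g : ZMod k) (hg : IsUnit g) (hcl : ∀ x ∈ S, x + g ∈ S) : S = Finset.univ := by
  have hn : ∀ n : ℕ, ∀ x ∈ S, x + n • g ∈ S := by
    intro n
    induction n with
    | zero => simpa using fun x hx => hx
    | succ n ih =>
      intro x hx
      have := hcl _ (ih x hx)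
      rw [succ_nsmul, ← add_assoc]
      exact this
  obtain ⟨s, hs⟩ := hS
  apply Finset.eq_univ_of_forall
  intro t
  have key : t = s + (((t - s) * g⁻¹).val) • g := by
    rw [nsmul_eq_mul]
    have h1 : ((((t - s) * g⁻¹).val : ℕ) : ZMod k) = (t - s) * g⁻¹ := by
      simp [ZMod.natCast_val, ZMod.cast_id]
    rw [h1, mul_assoc, ZMod.inv_mul_of_unit g hg, mul_one]
    ring
  rw [key]
  exact hn _ s hs

lemma exists_escape {k : ℕ} [NeZero k] (S : Finset (ZMod k)) (hS : S.Nonempty)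
    (hcard : S.card < k) (g₁ g₂ : ZMod k) (hg : IsUnit (g₂ - g₁)) :
    ∃ x ∈ S, x + g₁ ∉ S ∨ x + g₂ ∉ S := by
  by_contra h
  push_neg at h
  have hcl : ∀ x ∈ S, x + (g₂ - g₁) ∈ S := by
    intro x hx
    have h1 : ∀ y ∈ S, y + g₁ ∈ S := fun y hy => (h y hy).1
    apply closed_rev S g₁ h1
    have he : x + (g₂ - g₁) + g₁ = x + g₂ := by ring
    rw [he]
    exact (h x hx).2
  have := closed_full S hS _ hg hcl
  rw [this, Finset.card_univ, ZMod.card] at hcard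
  exact lt_irrefl _ hcard

/-- Let `p₁ ≠ p₂` be primes, `k = p₁p₂`, and `A` a nonempty finite set of integers with
residue classes `A_i = k·X_i + u_i` (indexed by `1, …, j`, `j ≥ 2`, with `u₁ = 0`,
`|A₁| ≥ … ≥ |A_j|` and `gcd(u₁, …, u_j) = 1`). If `gcd(u₂, k) = 1`, then
`|Δ_{22}| ≥ |A₁|` whenever `2 ∈ E`, and `|Δ_{ii}| ≥ |A₂|` whenever `i ∈ E`, `i ≠ 2`,
where `E = {i : 0 < |X̂_i| < k}`. -/
theorem stmt_13 (p₁ p₂ : ℕ) (hp₁ : p₁.Prime) (hp₂ : p₂.Prime) (hne : p₁ ≠ p₂)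
    (k : ℕ) (hk : k = p₁ * p₂)
    (A : Finset ℤ) (hA : A.Nonempty)
    (j : ℕ) (hj : 2 ≤ j) (u : ℕ → ℕ)
    (hu_lt : ∀ i ∈ Finset.Icc 1 j, u i < k)
    (hu_inj : ∀ i ∈ Finset.Icc 1 j, ∀ i' ∈ Finset.Icc 1 j, u i = u i' → i = i')
    (hu_attained : ∀ i ∈ Finset.Icc 1 j, (resClass k A (u i)).Nonempty)
    (hu_cover : ∀ a ∈ A, ∃ i ∈ Finset.Icc 1 j, a % (k : ℤ) = (u i : ℤ))
    (hu1 : u 1 = 0)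
    (hmono : ∀ i ∈ Finset.Icc 1 j, ∀ i' ∈ Finset.Icc 1 j, i ≤ i' →
      (resClass k A (u i')).card ≤ (resClass k A (u i)).card)
    (hgcd : (Finset.Icc 1 j).gcd u = 1)
    (hu2 : Nat.gcd (u 2) k = 1) :
    ((0 < (Xhat k A (u 2)).card ∧ (Xhat k A (u 2)).card < k →
        (resClass k A (u 1)).card ≤ (Delta k A (u 2)).card) ∧
      ∀ i ∈ Finset.Icc 1 j, i ≠ 2 →
        0 < (Xhat k A (u i)).card ∧ (Xhat k A (u i)).card < k →
          (resClass k A (u 2)).card ≤ (Delta k A (u i)).card) := by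
  have hk0 : k ≠ 0 := by
    subst hk; exact Nat.mul_ne_zero hp₁.pos.ne' hp₂.pos.ne'
  haveI : NeZero k := ⟨hk0⟩
  have h1j : 1 ∈ Finset.Icc 1 j := by simp [Finset.mem_Icc]; omega
  have h2j : 2 ∈ Finset.Icc 1 j := by simp [Finset.mem_Icc]; omega
  have hu2unit : IsUnit ((u 2 : ℕ) : ZMod k) := by
    rw [ZMod.isUnit_iff_coprime]; exact hu2
  constructor
  · rintro ⟨hpos, hlt⟩
    have hS : (Xhat k A ((u 2 : ℕ) : ℤ)).Nonempty := Finset.card_pos.mp hpos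
    have hgu : IsUnit ((((u 1 : ℕ) : ZMod k) - ((u 2 : ℕ) : ZMod k)) - 0) := by
      have he : (((u 1 : ℕ) : ZMod k) - ((u 2 : ℕ) : ZMod k)) - 0
          = -((u 2 : ℕ) : ZMod k) := by rw [hu1]; push_cast; ring
      rw [he]; exact hu2unit.neg
    obtain ⟨xh, hxh, hor⟩ := exists_escape _ hS hlt 0
      (((u 1 : ℕ) : ZMod k) - ((u 2 : ℕ) : ZMod k)) hgu
    rcases hor with h0 | hmiss'
    · exact absurd (by simpa using hxh) h0
    · obtain ⟨ξ, hξ, rfl⟩ := Finset.mem_image.mp hxh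
      have he : ((ξ : ℤ) : ZMod k) + (((u 1 : ℕ) : ZMod k) - ((u 2 : ℕ) : ZMod k))
          = ((ξ : ℤ) : ZMod k) + (u 1 : ℕ) - (u 2 : ℕ) := by ring
      rw [he] at hmiss'
      exact lemA k hk0 A (u 2) (u 1) ξ hξ hmiss'
  · rintro i hi hine ⟨hpos, hlt⟩
    have hS : (Xhat k A ((u i : ℕ) : ℤ)).Nonempty := Finset.card_pos.mp hpos
    have hgu : IsUnit ((((u 2 : ℕ) : ZMod k) - ((u i : ℕ) : ZMod k))
        - (((u 1 : ℕ) : ZMod k) - ((u i : ℕ) : ZMod k))) := by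
      have he : (((u 2 : ℕ) : ZMod k) - ((u i : ℕ) : ZMod k))
          - (((u 1 : ℕ) : ZMod k) - ((u i : ℕ) : ZMod k)) = ((u 2 : ℕ) : ZMod k) := by
        rw [hu1]; push_cast; ring
      rw [he]; exact hu2unit
    obtain ⟨xh, hxh, hor⟩ := exists_escape _ hS hlt
      (((u 1 : ℕ) : ZMod k) - ((u i : ℕ) : ZMod k))
      (((u 2 : ℕ) : ZMod k) - ((u i : ℕ) : ZMod k)) hgu
    obtain ⟨ξ, hξ, rfl⟩ := Finset.mem_image.mp hxh
    rcases hor with hmiss' | hmiss'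
    · have he : ((ξ : ℤ) : ZMod k) + (((u 1 : ℕ) : ZMod k) - ((u i : ℕ) : ZMod k))
          = ((ξ : ℤ) : ZMod k) + (u 1 : ℕ) - (u i : ℕ) := by ring
      rw [he] at hmiss'
      exact le_trans (hmono 1 h1j 2 h2j (by norm_num))
        (lemA k hk0 A (u i) (u 1) ξ hξ hmiss')
    · have he : ((ξ : ℤ) : ZMod k) + (((u 2 : ℕ) : ZMod k) - ((u i : ℕ) : ZMod k))
          = ((ξ : ℤ) : ZMod k) + (u 2 : ℕ) - (u i : ℕ) := by ring
      rw [he] at hmiss'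
      exact lemA k hk0 A (u i) (u 2) ξ hξ hmiss'
end
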